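/- arXiv:2008.02221 — 5 statements merged into one kernel-verified Lean document; each statement's English description precedes it below -/
import Mathlib

section
/- (Tits-type theorem, Theorem 5.2 of the paper) Let A be a commutative ring, n ≥ 3 an integer, and 𝔮 ⊆ A an ideal. Then E_n(A,𝔮²) is contained in F_n(A,𝔮). -/
/-- The set of elementary matrices `1 + a • e i j` (viewed inside `SL n A`)
with off-diagonal position `(i,j)` and entry `a` belonging to the set `S`. -/
def elemSet (n : ℕ) (A : Type*) [CommRing A] (S : Set A) :
    Set (Matrix.SpecialLinearGroup (Fin n) A) :=
  { M | ∃ i j : Fin n, i ≠ j ∧ ∃ a ∈ S,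
      (M : Matrix (Fin n) (Fin n) A) = 1 + Matrix.single i j a }

/-- `E_n(A)`: the subgroup of `SL_n(A)` generated by all elementary matrices. -/
def En (n : ℕ) (A : Type*) [CommRing A] :
    Subgroup (Matrix.SpecialLinearGroup (Fin n) A) :=
  Subgroup.closure (elemSet n A Set.univ)

/-- `F_n(A,𝔮)`: the subgroup generated by elementary matrices with entry in `𝔮`. -/
def Fn (n : ℕ) (A : Type*) [CommRing A] (q : Ideal A) :
    Subgroup (Matrix.SpecialLinearGroup (Fin n) A) :=
  Subgroup.closure (elemSet n A (q : Set A))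

/-- `SL_n(A,𝔮)`: the principal congruence subgroup, i.e. the kernel of
reduction `SL_n(A) → SL_n(A/𝔮)`. -/
def SLrel (n : ℕ) (A : Type*) [CommRing A] (q : Ideal A) :
    Subgroup (Matrix.SpecialLinearGroup (Fin n) A) :=
  (Matrix.SpecialLinearGroup.map (Ideal.Quotient.mk q)).ker

/-- `E_n(A,𝔮)`: the normal closure of `F_n(A,𝔮)` in `E_n(A)`, i.e. the subgroup
generated by all `E_n(A)`-conjugates of elements of `F_n(A,𝔮)`. -/
def EnRel (n : ℕ) (A : Type*) [CommRing A] (q : Ideal A) :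
    Subgroup (Matrix.SpecialLinearGroup (Fin n) A) :=
  Subgroup.closure { M | ∃ g ∈ En n A, ∃ f ∈ Fn n A q, M = g * f * g⁻¹ }

/-!
Write `c ∈ 𝔮²` as a sum of products `a * b` with `a, b ∈ 𝔮`. For `g ∈ SL_n(A)` the conjugate
`g (I + ab e_{ij}) g⁻¹` is `I + v (ab w)ᵀ`, where `v = g e_i` and `w` is the `j`-th row of `g⁻¹`;
so `uᵀv = 1` for the `i`-th row `u` of `g⁻¹`, and `wᵀv = 0`. The Koszul identity
`w = (uᵀv) w - (wᵀv) u = Σ_{k,m} w_k u_m (v_m e_k - v_k e_m)` writes `w` as a sum of vectors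
orthogonal to `v` with at most two nonzero entries. Each factor `I + (a v)(c (v_m e_k - v_k e_m))ᵀ`
splits further into matrices `I + V Wᵀ` with `Wᵀ V = 0`, entries in `𝔮`, and `V`, `W` vanishing at
a common coordinate `l` (this is where `n ≥ 3` enters). Such a matrix is the commutator of
`I + V e_lᵀ` and `I + e_l Wᵀ`, both products of elementary matrices with entries in `𝔮`.
-/

-- `Matrix.SpecialLinearGroup` stays qualified: the bare name would also match the root
-- `SpecialLinearGroup` of linear automorphisms.
open Matrix

section OneAdd

variable {R : Type*} [Ring R]

theorem one_add_mul_one_add_of_mul_eq_zero {x y : R} (h : x * y = 0) :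
    (1 + x) * (1 + y) = 1 + (x + y) := by
  rw [add_mul, one_mul, mul_add, mul_one, h]
  abel

theorem one_add_sum_mem_of_mul_eq_zero {S : Submonoid R} {ι : Type*} (s : Finset ι) (N : ι → R)
    (hN : ∀ i ∈ s, ∀ j ∈ s, i ≠ j → N i * N j = 0) (h : ∀ i ∈ s, 1 + N i ∈ S) :
    1 + ∑ i ∈ s, N i ∈ S := by
  induction s using Finset.cons_induction with
  | empty => simpa only [Finset.sum_empty, add_zero] using S.one_mem
  | cons a s ha ih =>
    have hmul : N a * ∑ j ∈ s, N j = 0 := by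
      rw [Finset.mul_sum]
      exact Finset.sum_eq_zero fun j hj => hN a (Finset.mem_cons_self a s) j
        (Finset.mem_cons_of_mem hj) fun h => ha (h ▸ hj)
    rw [Finset.sum_cons, ← one_add_mul_one_add_of_mul_eq_zero hmul]
    exact S.mul_mem (h a (Finset.mem_cons_self a s))
      (ih (fun i hi j hj => hN i (Finset.mem_cons_of_mem hi) j (Finset.mem_cons_of_mem hj))
        fun i hi => h i (Finset.mem_cons_of_mem hi))

theorem one_add_mul_one_add_mul_one_sub_mul_one_sub {P Q : R} (hP : P * P = 0) (hQ : Q * Q = 0)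
    (hQP : Q * P = 0) : (1 + P) * (1 + Q) * (1 - P) * (1 - Q) = 1 + P * Q :=
  calc (1 + P) * (1 + Q) * (1 - P) * (1 - Q) = (1 + P) * ((1 + Q) * (1 - P)) * (1 - Q) := by
        simp only [mul_assoc]
    _ = (1 + P) * (1 + Q - P) * (1 - Q) := by
        rw [show (1 + Q) * (1 - P) = 1 + Q - P - Q * P by noncomm_ring, hQP, sub_zero]
    _ = (1 + Q + P * Q) * (1 - Q) := by
        rw [show (1 + P) * (1 + Q - P) = 1 + Q + P * Q - P * P by noncomm_ring, hP, sub_zero]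
    _ = 1 + P * Q := by
        rw [show (1 + Q + P * Q) * (1 - Q) = 1 + P * Q - Q * Q - P * (Q * Q) by noncomm_ring,
          hQ, mul_zero, sub_zero, sub_zero]

end OneAdd

section VecMulVec

variable {ι A : Type*} [CommRing A]

def koszulVec [DecidableEq ι] (v : ι → A) (k m : ι) : ι → A :=
  Pi.single k (v m) - Pi.single m (v k)

theorem koszulVec_self [DecidableEq ι] (v : ι → A) (k : ι) : koszulVec v k k = 0 :=
  sub_self _

theorem koszulVec_apply_of_ne [DecidableEq ι] (v : ι → A) {k m l : ι} (hk : l ≠ k) (hm : l ≠ m) :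
    koszulVec v k m l = 0 := by
  simp [koszulVec, hk, hm]

theorem koszulVec_dotProduct [Fintype ι] [DecidableEq ι] (v : ι → A) (k m : ι) :
    koszulVec v k m ⬝ᵥ v = 0 := by
  simp [koszulVec, sub_dotProduct, mul_comm]

theorem sum_sum_smul_koszulVec [Fintype ι] [DecidableEq ι] (u v w : ι → A) :
    ∑ k, ∑ m, (w k * u m) • koszulVec v k m = (u ⬝ᵥ v) • w - (w ⬝ᵥ v) • u := by
  ext j
  simp [koszulVec, Finset.sum_apply, Pi.single_apply, mul_sub, Finset.sum_sub_distrib, dotProduct,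
    Finset.mul_sum, mul_comm, mul_left_comm]

theorem vecMulVec_sum {κ : Type*} (v : ι → A) (s : Finset κ) (X : κ → ι → A) :
    vecMulVec v (∑ p ∈ s, X p) = ∑ p ∈ s, vecMulVec v (X p) :=
  map_sum (vecMulVecBilin A A v) X s

theorem mul_single_mul [Fintype ι] [DecidableEq ι] (M N : Matrix ι ι A) (i j : ι) (c : A) :
    M * single i j c * N = vecMulVec (M.col i) (c • N.row j) := by
  have hsingle : single i j c = vecMulVec (Pi.single i 1) (Pi.single j c) := by
    ext a b
    simp only [single_apply, vecMulVec_apply, Pi.single_apply]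
    aesop
  rw [hsingle, mul_vecMulVec, vecMulVec_mul, mulVec_single_one, single_vecMul]

end VecMulVec

def FnMat (n : ℕ) (A : Type*) [CommRing A] (q : Ideal A) : Submonoid (Matrix (Fin n) (Fin n) A) :=
  (Fn n A q).toSubmonoid.map Matrix.SpecialLinearGroup.coeMonoidHom

section FnMat

variable {n : ℕ} {A : Type*} [CommRing A] {q : Ideal A}

theorem one_add_single_mem_fnMat {i j : Fin n} (hij : i ≠ j) {c : A} (hc : c ∈ q) :
    1 + single i j c ∈ FnMat n A q :=
  ⟨⟨transvection i j c, det_transvection_of_ne i j hij c⟩,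
    Subgroup.subset_closure ⟨i, j, hij, c, hc, rfl⟩, rfl⟩

theorem one_add_vecMulVec_single_one_right_mem {V : Fin n → A} {k : Fin n} (hVk : V k = 0)
    (hV : ∀ l, V l ∈ q) : 1 + vecMulVec V (Pi.single k 1) ∈ FnMat n A q := by
  have hsum : vecMulVec V (Pi.single k 1) = ∑ l, single l k (V l) := by
    ext a b
    simp [vecMulVec_apply, Pi.single_apply, Matrix.sum_apply, single_apply, ite_and, eq_comm]
  rw [hsum]
  refine one_add_sum_mem_of_mul_eq_zero _ _ (fun l _ l' _ _ => ?_) fun l _ => ?_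
  · rcases eq_or_ne k l' with rfl | hkl'
    · simp [hVk]
    · simp [hkl']
  · rcases eq_or_ne l k with rfl | hlk
    · simp [hVk, (FnMat n A q).one_mem]
    · exact one_add_single_mem_fnMat hlk (hV l)

theorem one_add_vecMulVec_single_one_left_mem {W : Fin n → A} {k : Fin n} (hWk : W k = 0)
    (hW : ∀ l, W l ∈ q) : 1 + vecMulVec (Pi.single k 1) W ∈ FnMat n A q := by
  have hsum : vecMulVec (Pi.single k 1) W = ∑ l, single k l (W l) := by
    ext a b
    simp [vecMulVec_apply, Pi.single_apply, Matrix.sum_apply, single_apply, ite_and, eq_comm]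
  rw [hsum]
  refine one_add_sum_mem_of_mul_eq_zero _ _ (fun l _ l' _ _ => ?_) fun l _ => ?_
  · rcases eq_or_ne l k with rfl | hlk
    · simp [hWk]
    · simp [hlk]
  · rcases eq_or_ne k l with rfl | hkl
    · simp [hWk, (FnMat n A q).one_mem]
    · exact one_add_single_mem_fnMat hkl (hW l)

theorem one_add_vecMulVec_mem_of_apply_eq_zero {V W : Fin n → A} {k : Fin n} (hVk : V k = 0)
    (hWk : W k = 0) (hWV : W ⬝ᵥ V = 0) (hV : ∀ l, V l ∈ q) (hW : ∀ l, W l ∈ q) :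
    1 + vecMulVec V W ∈ FnMat n A q := by
  set e : Fin n → A := Pi.single k 1
  have he : e ⬝ᵥ e = 1 := by simp [e]
  have heV : e ⬝ᵥ V = 0 := by simp [e, hVk]
  have hWe : W ⬝ᵥ e = 0 := by simp [e, hWk]
  have hcomm := one_add_mul_one_add_mul_one_sub_mul_one_sub (P := vecMulVec V e)
    (Q := vecMulVec e W) (by simp [vecMulVec_mul_vecMulVec, heV])
    (by simp [vecMulVec_mul_vecMulVec, hWe]) (by simp [vecMulVec_mul_vecMulVec, hWV])
  rw [vecMulVec_mul_vecMulVec, he, one_smul] at hcomm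
  rw [← hcomm, sub_eq_add_neg, sub_eq_add_neg, ← neg_vecMulVec, ← vecMulVec_neg]
  refine mul_mem (mul_mem (mul_mem ?_ ?_) ?_) ?_
  · exact one_add_vecMulVec_single_one_right_mem hVk hV
  · exact one_add_vecMulVec_single_one_left_mem hWk hW
  · exact one_add_vecMulVec_single_one_right_mem (by simp [hVk]) fun l => q.neg_mem (hV l)
  · exact one_add_vecMulVec_single_one_left_mem (by simp [hWk]) fun l => q.neg_mem (hW l)

theorem one_add_vecMulVec_mem_of_supported_on_pair (hn : 3 ≤ n) {V W : Fin n → A}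
    {k m : Fin n} (hkm : k ≠ m) (hW0 : ∀ l, l ≠ k → l ≠ m → W l = 0) (hWV : W ⬝ᵥ V = 0)
    (hV : ∀ l, V l ∈ q) (hW : ∀ l, W l ∈ q) : 1 + vecMulVec V W ∈ FnMat n A q := by
  obtain ⟨l, hlk, hlm⟩ := Fin.exists_ne_and_ne_of_two_lt k m hn
  set V₂ : Fin n → A := fun i => if i = k ∨ i = m then V i else 0
  set V₁ : Fin n → A := V - V₂
  have hV₁k : V₁ k = 0 := by simp [V₁, V₂]
  have hV₁m : V₁ m = 0 := by simp [V₁, V₂]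
  have hW_eq : W = Pi.single m (W m) + Pi.single k (W k) := by
    ext i
    by_cases hik : i = k
    · simp [hik, hkm]
    by_cases him : i = m
    · simp [him, hkm.symm]
    simp [hik, him, hW0 i hik him]
  have hWmV₁ : Pi.single m (W m) ⬝ᵥ V₁ = 0 := by simp [hV₁m]
  have hWkV₁ : Pi.single k (W k) ⬝ᵥ V₁ = 0 := by simp [hV₁k]
  have hWV₁ : W ⬝ᵥ V₁ = 0 := by rw [hW_eq, add_dotProduct, hWmV₁, hWkV₁, add_zero]
  have hWV₂ : W ⬝ᵥ V₂ = 0 := by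
    rw [show V₂ = V - V₁ by simp [V₁], dotProduct_sub, hWV, hWV₁, sub_zero]
  have hV₂q : ∀ i, V₂ i ∈ q := fun i => by
    by_cases h : i = k ∨ i = m <;> simp [V₂, h, hV]
  have hV₁q : ∀ i, V₁ i ∈ q := fun i => q.sub_mem (hV i) (hV₂q i)
  have hWq : ∀ j i, (Pi.single j (W j) : Fin n → A) i ∈ q := fun j i => by
    by_cases h : i = j <;> simp [h, hW]
  rw [show V = V₁ + V₂ by simp [V₁], add_vecMulVec,
    ← one_add_mul_one_add_of_mul_eq_zero (by simp [vecMulVec_mul_vecMulVec, hWV₂])]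
  refine mul_mem ?_ ?_
  · rw [hW_eq, vecMulVec_add,
      ← one_add_mul_one_add_of_mul_eq_zero (by simp [vecMulVec_mul_vecMulVec, hWmV₁])]
    exact mul_mem
      (one_add_vecMulVec_mem_of_apply_eq_zero (k := k) hV₁k (by simp [hkm]) hWmV₁ hV₁q (hWq m))
      (one_add_vecMulVec_mem_of_apply_eq_zero (k := m) hV₁m (by simp [hkm.symm]) hWkV₁ hV₁q
        (hWq k))
  · exact one_add_vecMulVec_mem_of_apply_eq_zero (k := l) (by simp [V₂, hlk, hlm])
      (hW0 l hlk hlm) hWV₂ hV₂q hW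

theorem one_add_vecMulVec_smul_koszulVec_mem (hn : 3 ≤ n) {a c : A} (ha : a ∈ q) (hc : c ∈ q)
    (v : Fin n → A) (k m : Fin n) :
    1 + vecMulVec v ((a * c) • koszulVec v k m) ∈ FnMat n A q := by
  rcases eq_or_ne k m with rfl | hkm
  · simp [koszulVec_self, (FnMat n A q).one_mem]
  rw [mul_smul, vecMulVec_smul, ← smul_vecMulVec]
  refine one_add_vecMulVec_mem_of_supported_on_pair hn hkm (fun l hlk hlm => ?_) ?_
    (fun l => q.mul_mem_right (v l) ha) (fun l => q.mul_mem_right _ hc)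
  · simp [koszulVec_apply_of_ne v hlk hlm]
  · simp [koszulVec_dotProduct]

theorem one_add_vecMulVec_mem_of_dotProduct_eq_one (hn : 3 ≤ n) {a b : A} (ha : a ∈ q)
    (hb : b ∈ q) {u v w : Fin n → A} (huv : u ⬝ᵥ v = 1) (hwv : w ⬝ᵥ v = 0) :
    1 + vecMulVec v ((a * b) • w) ∈ FnMat n A q := by
  have hw : (a * b) • w =
      ∑ p : Fin n × Fin n, (a * (b * (w p.1 * u p.2))) • koszulVec v p.1 p.2 := by
    rw [Fintype.sum_prod_type]
    calc (a * b) • w = (a * b) • ∑ k, ∑ m, (w k * u m) • koszulVec v k m := by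
          rw [sum_sum_smul_koszulVec, huv, hwv, one_smul, zero_smul, sub_zero]
      _ = _ := by simp only [Finset.smul_sum, smul_smul, mul_assoc]
  rw [hw, vecMulVec_sum]
  refine one_add_sum_mem_of_mul_eq_zero _ _ (fun p _ p' _ _ => ?_) fun p _ => ?_
  · simp [vecMulVec_mul_vecMulVec, koszulVec_dotProduct]
  · exact one_add_vecMulVec_smul_koszulVec_mem hn ha (q.mul_mem_right _ hb) v p.1 p.2

theorem one_add_conj_single_mem_fnMat (hn : 3 ≤ n) (g : Matrix.SpecialLinearGroup (Fin n) A)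
    {i j : Fin n} (hij : i ≠ j) {c : A} (hc : c ∈ q ^ 2) :
    1 + (g : Matrix (Fin n) (Fin n) A) * single i j c *
      (g⁻¹ : Matrix.SpecialLinearGroup (Fin n) A) ∈ FnMat n A q := by
  set G : Matrix (Fin n) (Fin n) A := ↑g
  set G' : Matrix (Fin n) (Fin n) A := ↑g⁻¹
  have hG : G' * G = 1 := by
    rw [← Matrix.SpecialLinearGroup.coe_mul, inv_mul_cancel, Matrix.SpecialLinearGroup.coe_one]
  have huv : G'.row i ⬝ᵥ G.col i = 1 := by
    have := congrFun₂ hG i i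
    rwa [one_apply_eq] at this
  have hwv : G'.row j ⬝ᵥ G.col i = 0 := by
    have := congrFun₂ hG j i
    rwa [one_apply_ne hij.symm] at this
  rw [mul_single_mul]
  rw [sq] at hc
  induction hc using Submodule.mul_induction_on' with
  | mem_mul_mem a ha b hb => exact one_add_vecMulVec_mem_of_dotProduct_eq_one hn ha hb huv hwv
  | add c₁ _ c₂ _ h₁ h₂ =>
    rw [add_smul, vecMulVec_add,
      ← one_add_mul_one_add_of_mul_eq_zero (by simp [vecMulVec_mul_vecMulVec, hwv])]
    exact mul_mem h₁ h₂

theorem fn_sq_le_comap_conj (hn : 3 ≤ n) (g : Matrix.SpecialLinearGroup (Fin n) A) :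
    Fn n A (q ^ 2) ≤ (Fn n A q).comap (MulAut.conj g).toMonoidHom := by
  refine (Subgroup.closure_le _).2 ?_
  rintro x ⟨i, j, hij, c, hc, hx⟩
  have hconj : ((g * x * g⁻¹ : Matrix.SpecialLinearGroup (Fin n) A) : Matrix (Fin n) (Fin n) A) =
      1 + (g : Matrix (Fin n) (Fin n) A) * single i j c *
        (g⁻¹ : Matrix.SpecialLinearGroup (Fin n) A) := by
    simp only [Matrix.SpecialLinearGroup.coe_mul, hx, mul_add, add_mul, mul_one]
    rw [← Matrix.SpecialLinearGroup.coe_mul, mul_inv_cancel, Matrix.SpecialLinearGroup.coe_one]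
  have hmem := one_add_conj_single_mem_fnMat hn g hij hc
  rw [← hconj] at hmem
  show g * x * g⁻¹ ∈ Fn n A q
  exact (Submonoid.mem_map_iff_mem
    (f := Matrix.SpecialLinearGroup.coeMonoidHom (ι := Fin n) (R := A))
    Matrix.SpecialLinearGroup.coeMonoidHom_injective).1 hmem

end FnMat

/-- **Tits-type theorem** (Theorem 3 of Nica, Theorem 5.2 of the paper).
For any commutative ring `A`, `n ≥ 3` and ideal `𝔮 ⊆ A`, the relative elementary
subgroup `E_n(A,𝔮²)` is contained in `F_n(A,𝔮)`. -/
theorem enRel_sq_le_fn (A : Type*) [CommRing A] (n : ℕ) (hn : 3 ≤ n) (q : Ideal A) :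
    EnRel n A (q ^ 2) ≤ Fn n A q := by
  refine (Subgroup.closure_le _).2 ?_
  rintro _ ⟨g, -, f, hf, rfl⟩
  exact fn_sq_le_comap_conj hn g hf
end

section
/- (Lemma 5.3(i) of the paper) Let A be a commutative ring, n ≥ 3, let q ∈ A generate a proper principal ideal 𝔮 = qA, and let D ∈ Mat_n(A) be a matrix whose image in Mat_n(A_q) is invertible, where A_q denotes the localization of A away from q. Then there exists an integer m > 0 such that for every M ∈ SL_n(A, 𝔮^m) there exists N ∈ SL_n(A, 𝔮) with D·M = N·D in Mat_n(A_q) (that is, D^{-1}·SL_n(A,𝔮)·D ⊇ SL_n(A,𝔮^m) as subsets of Mat_n(A_q)). -/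
section

open Matrix

variable {A : Type*} [CommRing A]

theorem mem_SLrel_iff {n : ℕ} {J : Ideal A} {M : SpecialLinearGroup (Fin n) A} :
    M ∈ SLrel n A J ↔ (Ideal.Quotient.mk J).mapMatrix (M : Matrix (Fin n) (Fin n) A) = 1 := by
  rw [SLrel, MonoidHom.mem_ker]
  exact Subtype.ext_iff

section Localization

variable {q : A} (S : Type*) [CommRing S] [Algebra A S] [IsLocalization.Away q S]

theorem isNilpotent_of_mem_span_of_algebraMap_eq_zero {d : A} (hd : d ∈ Ideal.span {q})
    (h0 : algebraMap A S d = 0) : IsNilpotent d := by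
  obtain ⟨t, ht⟩ := IsLocalization.Away.exists_of_eq q (h0.trans (map_zero _).symm)
  obtain ⟨e, rfl⟩ := Ideal.mem_span_singleton'.mp hd
  exact ⟨t + 1, by linear_combination e ^ t * ht⟩

theorem isUnit_of_sub_one_mem_span_of_algebraMap_eq_one {x : A} (hx : x - 1 ∈ Ideal.span {q})
    (h1 : algebraMap A S x = 1) : IsUnit x := by
  have hnil : IsNilpotent (x - 1) :=
    isNilpotent_of_mem_span_of_algebraMap_eq_zero S hx (by rw [map_sub, h1, map_one, sub_self])
  simpa using hnil.isUnit_one_add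

end Localization

variable {ι : Type*} [Fintype ι] [DecidableEq ι]

theorem mapMatrix_mk_span_singleton_eq_one_iff {a : A} {M : Matrix ι ι A} :
    (Ideal.Quotient.mk (Ideal.span {a})).mapMatrix M = 1 ↔
      ∃ X : Matrix ι ι A, M = 1 + a • X := by
  constructor
  · intro h
    have hdvd : ∀ i j, a ∣ (M - 1) i j := fun i j => by
      rw [← Ideal.mem_span_singleton, ← Ideal.Quotient.eq_zero_iff_mem, Matrix.sub_apply,
        map_sub, sub_eq_zero]
      simpa [one_apply, apply_ite (Ideal.Quotient.mk _)] using congr_fun (congr_fun h i) j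
    choose X hX using hdvd
    exact ⟨of X, by ext i j; simp [← hX]⟩
  · rintro ⟨X, rfl⟩
    ext i j
    simp [one_apply, apply_ite (Ideal.Quotient.mk _),
      Ideal.Quotient.eq_zero_iff_mem.mpr (Ideal.mem_span_singleton_self a)]

theorem one_add_smul_mul_adjugate_mul (c : A) (D X : Matrix ι ι A) :
    (1 + c • (D * X * D.adjugate)) * D = D * (1 + (c * D.det) • X) := by
  rw [add_mul, one_mul, smul_mul, Matrix.mul_assoc (D * X), adjugate_mul, mul_add, mul_one,
    Matrix.mul_smul, Matrix.mul_one, Matrix.mul_smul, smul_smul]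

theorem mapMatrix_diagonal_update_inv_eq_one {B : Type*} [CommRing B] (φ : A →+* B) (i : ι)
    {u : Aˣ} (hu : φ u = 1) :
    φ.mapMatrix (diagonal (Function.update 1 i (u⁻¹ : Aˣ).val)) = 1 := by
  have hinv : φ ↑u⁻¹ = 1 := by
    have h := congrArg φ u.inv_mul
    rwa [map_mul, hu, mul_one, map_one] at h
  rw [RingHom.mapMatrix_apply, diagonal_map (map_zero φ), ← diagonal_one]
  congr 1
  funext j
  rcases eq_or_ne j i with rfl | hj
  · simp [hinv]
  · simp [hj]

theorem exists_specialLinearGroup_mapMatrix_eq {q : A} (S : Type*) [CommRing S] [Algebra A S]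
    [IsLocalization.Away q S] {N : Matrix ι ι A}
    (hNq : (Ideal.Quotient.mk (Ideal.span {q})).mapMatrix N = 1)
    (hNS : algebraMap A S N.det = 1) :
    ∃ N' : SpecialLinearGroup ι A,
      (Ideal.Quotient.mk (Ideal.span {q})).mapMatrix (N' : Matrix ι ι A) = 1 ∧
        (algebraMap A S).mapMatrix (N' : Matrix ι ι A) = (algebraMap A S).mapMatrix N := by
  rcases isEmpty_or_nonempty ι with _ | ⟨⟨i⟩⟩
  · exact ⟨⟨N, det_isEmpty⟩, hNq, rfl⟩
  have hdetq : Ideal.Quotient.mk (Ideal.span {q}) N.det = 1 := by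
    rw [RingHom.map_det, hNq, det_one]
  obtain ⟨δ, hδ⟩ := isUnit_of_sub_one_mem_span_of_algebraMap_eq_one S
    (Ideal.Quotient.eq.mp (hdetq.trans (map_one _).symm)) hNS
  set E := diagonal (Function.update 1 i (δ⁻¹ : Aˣ).val)
  have hEq : (Ideal.Quotient.mk (Ideal.span {q})).mapMatrix E = 1 :=
    mapMatrix_diagonal_update_inv_eq_one _ i (by rwa [hδ])
  have hES : (algebraMap A S).mapMatrix E = 1 :=
    mapMatrix_diagonal_update_inv_eq_one _ i (by rwa [hδ])
  refine ⟨⟨N * E, ?_⟩, ?_, ?_⟩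
  · rw [det_mul, det_diagonal, Finset.prod_update_of_mem (Finset.mem_univ i), ← hδ]
    simp
  · rw [map_mul, hNq, hEq, mul_one]
  · rw [map_mul, hES, mul_one]

end

theorem conj_SLrel_general (A : Type*) [CommRing A] (n : ℕ)
    (q : A)
    (D : Matrix (Fin n) (Fin n) A)
    (hD : IsUnit ((algebraMap A (Localization.Away q)).mapMatrix D)) :
    ∃ m : ℕ, 0 < m ∧
      ∀ M ∈ SLrel n A (Ideal.span {q} ^ m), ∃ N ∈ SLrel n A (Ideal.span {q}),
        (algebraMap A (Localization.Away q)).mapMatrix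
            (D * (M : Matrix (Fin n) (Fin n) A)) =
          (algebraMap A (Localization.Away q)).mapMatrix
            ((N : Matrix (Fin n) (Fin n) A) * D) := by
  have hDdet : IsUnit (algebraMap A (Localization.Away q) D.det) := by
    rwa [RingHom.map_det, ← Matrix.isUnit_iff_isUnit_det]
  obtain ⟨s, u, hu⟩ := (IsLocalization.Away.algebraMap_isUnit_iff q).mp hDdet
  refine ⟨s + 1, s.succ_pos, fun M hM => ?_⟩
  obtain ⟨X, hX⟩ : ∃ X, (M : Matrix (Fin n) (Fin n) A) = 1 + q ^ (s + 1) • X := by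
    rwa [← mapMatrix_mk_span_singleton_eq_one_iff, ← Ideal.span_singleton_pow,
      ← mem_SLrel_iff]
  set N := 1 + (q * u) • (D * X * D.adjugate)
  have hND : N * D = D * M := by
    rw [one_add_smul_mul_adjugate_mul, hX, pow_succ', hu, mul_assoc, mul_comm u]
  have hNq : (Ideal.Quotient.mk (Ideal.span {q})).mapMatrix N = 1 :=
    mapMatrix_mk_span_singleton_eq_one_iff.mpr ⟨u • (D * X * D.adjugate), by rw [smul_smul]⟩
  have hNdet : algebraMap A (Localization.Away q) N.det = 1 := by
    have h := congrArg (fun P => ((algebraMap A (Localization.Away q)).mapMatrix P).det) hND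
    simp only [map_mul, Matrix.det_mul, ← RingHom.map_det, M.2, map_one, mul_one] at h
    exact hDdet.mul_left_inj.mp (h.trans (one_mul _).symm)
  obtain ⟨N', hN'q, hN'f⟩ := exists_specialLinearGroup_mapMatrix_eq _ hNq hNdet
  exact ⟨N', mem_SLrel_iff.mpr hN'q, by rw [← hND, map_mul, map_mul, hN'f]⟩

/-- **Lemma 5.3(i) of the paper.** Let `A` be a commutative ring, `n ≥ 3`,
`q ∈ A` generating a proper principal ideal `𝔮 = qA`, and `D` a matrix over `A`
which becomes invertible over the localization `A_q = A[1/q]`. Then for some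
`m > 0` one has `D⁻¹ · SL_n(A,𝔮) · D ⊇ SL_n(A,𝔮^m)`, i.e. every
`M ∈ SL_n(A,𝔮^m)` satisfies `D·M = N·D` in `Mat_n(A_q)` for some `N ∈ SL_n(A,𝔮)`. -/
theorem conj_SLrel (A : Type*) [CommRing A] (n : ℕ) (hn : 3 ≤ n)
    (q : A) (hq : Ideal.span {q} ≠ ⊤)
    (D : Matrix (Fin n) (Fin n) A)
    (hD : IsUnit ((algebraMap A (Localization.Away q)).mapMatrix D)) :
    ∃ m : ℕ, 0 < m ∧
      ∀ M ∈ SLrel n A (Ideal.span {q} ^ m), ∃ N ∈ SLrel n A (Ideal.span {q}),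
        (algebraMap A (Localization.Away q)).mapMatrix
            (D * (M : Matrix (Fin n) (Fin n) A)) =
          (algebraMap A (Localization.Away q)).mapMatrix
            ((N : Matrix (Fin n) (Fin n) A) * D) :=
  conj_SLrel_general A n q D hD
end

section
/- (Proposition 5.4 of the paper) Let A be a Dedekind domain and n ≥ 3. Let q, q' ∈ A be nonzero elements generating proper principal ideals 𝔮 = qA and 𝔮' = q'A that are comaximal: 𝔮 + 𝔮' = A. Let D, D' ∈ Mat_n(A) be matrices such that det D divides some power of q and det D' divides some power of q'. Suppose H is a subgroup of SL_n(A) satisfying: (a) every M ∈ SL_n(A) for which there exists N ∈ F_n(A,𝔮) with D·M = N·D belongs to H, and (b) every M ∈ SL_n(A) for which there exists N' ∈ F_n(A,𝔮') with D'·M = N'·D' belongs to H. Then H contains E_n(A). -/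
/-!
Since `qA + q'A = A`, also `q^(2e+2) A + q'^(2e'+2) A = A`, so every elementary matrix is a product
of a transvection with entry in `q^(2e+2) A` and one with entry in `q'^(2e'+2) A`; by symmetry it
suffices to put the first kind into `H`. If `det D = d` divides `q^e`, such an entry has the form
`a b d²` with `a, b ∈ qA`, and then `D (1 + a b d² e_ij) D⁻¹ = 1 + a b d • u vᵀ`, where `u` is the
`i`-th column of `D` and `v` the `j`-th row of `adj D`, so `v ⬝ u = 0`. Writing `d • v` as a
combination of the vectors `u_k e_l - u_l e_k`, this matrix factors into matrices `1 + z tᵀ` with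
`t ⬝ z = 0`, entries in `qA` and `t` vanishing at some index `m`; each of these is a product of
elementary matrices and a commutator `[1 + z e_mᵀ, 1 + e_m tᵀ]`, hence lies in `F_n(A, qA)`.
-/

namespace Matrix

variable {ι R : Type*} [DecidableEq ι] [CommRing R]

theorem vecMulVec_single_single (i j : ι) (a b : R) :
    vecMulVec (Pi.single i a) (Pi.single j b) = single i j (a * b) := by
  ext k l
  simp only [vecMulVec_apply, Pi.single_apply, single_apply]
  split_ifs <;> simp_all

variable [Fintype ι]

theorem one_add_vecMulVec_mul_one_add_vecMulVec {z t z' t' : ι → R} (h : t ⬝ᵥ z' = 0) :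
    (1 + vecMulVec z t) * (1 + vecMulVec z' t') = 1 + vecMulVec z t + vecMulVec z' t' := by
  rw [add_mul, one_mul, mul_add, mul_one, vecMulVec_mul_vecMulVec, h, zero_smul,
    vecMulVec_zero, add_zero, add_right_comm]

theorem one_add_vecMulVec_sum_left_mem {S : Submonoid (Matrix ι ι R)} {κ : Type*}
    (s : Finset κ) (z : κ → ι → R) (t : ι → R) (hzt : ∀ k ∈ s, t ⬝ᵥ z k = 0)
    (hS : ∀ k ∈ s, 1 + vecMulVec (z k) t ∈ S) : 1 + vecMulVec (∑ k ∈ s, z k) t ∈ S := by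
  classical
  induction s using Finset.induction_on with
  | empty => simp [S.one_mem]
  | insert k s hk ih =>
    rw [Finset.sum_insert hk, add_comm (z k), add_vecMulVec, ← add_assoc,
      ← one_add_vecMulVec_mul_one_add_vecMulVec (hzt k (s.mem_insert_self k))]
    exact S.mul_mem (ih (fun l hl ↦ hzt l (s.mem_insert_of_mem hl))
      (fun l hl ↦ hS l (s.mem_insert_of_mem hl))) (hS k (s.mem_insert_self k))

theorem one_add_vecMulVec_sum_right_mem {S : Submonoid (Matrix ι ι R)} {κ : Type*}
    (s : Finset κ) (z : ι → R) (t : κ → ι → R) (hzt : ∀ k ∈ s, t k ⬝ᵥ z = 0)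
    (hS : ∀ k ∈ s, 1 + vecMulVec z (t k) ∈ S) : 1 + vecMulVec z (∑ k ∈ s, t k) ∈ S := by
  classical
  induction s using Finset.induction_on with
  | empty => simp [S.one_mem]
  | insert k s hk ih =>
    rw [Finset.sum_insert hk, vecMulVec_add, ← add_assoc,
      ← one_add_vecMulVec_mul_one_add_vecMulVec (hzt k (s.mem_insert_self k))]
    exact S.mul_mem (hS k (s.mem_insert_self k))
      (ih (fun l hl ↦ hzt l (s.mem_insert_of_mem hl)) (fun l hl ↦ hS l (s.mem_insert_of_mem hl)))

theorem one_add_vecMulVec_eq_commutator {z t : ι → R} {m : ι} (hz : z m = 0) (ht : t m = 0)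
    (htz : t ⬝ᵥ z = 0) :
    1 + vecMulVec z t =
      (1 + vecMulVec z (Pi.single m 1)) * (1 + vecMulVec (Pi.single m 1) t) *
        (1 + vecMulVec (-z) (Pi.single m 1)) * (1 + vecMulVec (Pi.single m 1) (-t)) := by
  simp [add_mul, mul_add, vecMulVec_mul_vecMulVec, hz, ht, htz]
  abel

theorem sum_smul_single_sub_single (u v w : ι → R) :
    ∑ k, ∑ l, (w k * v l) • (Pi.single l (u k) - Pi.single k (u l)) =
      (w ⬝ᵥ u) • v - (v ⬝ᵥ u) • w := by
  ext e
  simp [Finset.sum_apply, Pi.single_apply, mul_sub, Finset.sum_sub_distrib, dotProduct,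
    Finset.sum_mul]
  congr 1 <;> exact Finset.sum_congr rfl fun _ _ ↦ by ring

end Matrix

open Matrix

/-- `F_n(A,Q)` as a submonoid of `Mat_n(A)`, so that products of matrices of the form
`1 + u vᵀ` can be handled without determinant bookkeeping. -/
def fnMatrices (n : ℕ) (A : Type*) [CommRing A] (Q : Ideal A) :
    Submonoid (Matrix (Fin n) (Fin n) A) :=
  (Fn n A Q).toSubmonoid.map SpecialLinearGroup.coeMonoidHom

section fnMatrices

variable {n : ℕ} {A : Type*} [CommRing A] {Q : Ideal A}

theorem mem_fnMatrices_iff {X : Matrix (Fin n) (Fin n) A} :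
    X ∈ fnMatrices n A Q ↔ ∃ N ∈ Fn n A Q, (N : Matrix (Fin n) (Fin n) A) = X :=
  Submonoid.mem_map

theorem one_add_single_mem_fnMatrices {i j : Fin n} (hij : i ≠ j) {a : A} (ha : a ∈ Q) :
    1 + single i j a ∈ fnMatrices n A Q :=
  mem_fnMatrices_iff.2 ⟨SpecialLinearGroup.transvection hij a,
    Subgroup.subset_closure ⟨i, j, hij, a, ha, rfl⟩, rfl⟩

theorem one_add_single_mem_fnMatrices' {i j : Fin n} {a : A} (ha : a ∈ Q)
    (h : i = j → a = 0) : 1 + single i j a ∈ fnMatrices n A Q := by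
  by_cases hij : i = j
  · simp [h hij]
  · exact one_add_single_mem_fnMatrices hij ha

theorem one_add_vecMulVec_single_left_mem_fnMatrices {p : Fin n} {c : A} {t : Fin n → A}
    (htp : t p = 0) (ht : ∀ k, c * t k ∈ Q) :
    1 + vecMulVec (Pi.single p c) t ∈ fnMatrices n A Q := by
  rw [← Finset.univ_sum_single t]
  refine one_add_vecMulVec_sum_right_mem _ _ _ (fun k _ ↦ ?_) (fun k _ ↦ ?_)
  · by_cases hk : k = p <;> simp [hk, htp]
  · rw [vecMulVec_single_single]
    exact one_add_single_mem_fnMatrices' (ht k) (by rintro rfl; simp [htp])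

theorem one_add_vecMulVec_single_right_mem_fnMatrices {m : Fin n} {c : A} {z : Fin n → A}
    (hzm : z m = 0) (hz : ∀ k, z k * c ∈ Q) :
    1 + vecMulVec z (Pi.single m c) ∈ fnMatrices n A Q := by
  rw [← Finset.univ_sum_single z]
  refine one_add_vecMulVec_sum_left_mem _ _ _ (fun k _ ↦ ?_) (fun k _ ↦ ?_)
  · by_cases hk : k = m <;> simp [hk, hzm]
  · rw [vecMulVec_single_single]
    exact one_add_single_mem_fnMatrices' (hz k) (by rintro rfl; simp [hzm])

/-- Splitting off the `m`-th coordinate of `z`, the rest is a commutator of a column and a row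
transvection through the free index `m`. -/
theorem one_add_vecMulVec_mem_fnMatrices {m : Fin n} {z t : Fin n → A} (htm : t m = 0)
    (htz : t ⬝ᵥ z = 0) (hz : ∀ k, z k ∈ Q) (ht : ∀ k, t k ∈ Q) :
    1 + vecMulVec z t ∈ fnMatrices n A Q := by
  set z₀ := z - Pi.single m (z m)
  have hz₀m : z₀ m = 0 := by simp [z₀]
  have hz₀ : ∀ k, z₀ k ∈ Q := fun k ↦ by
    by_cases hk : k = m <;> simp [z₀, hk, hz]
  have htz₀ : t ⬝ᵥ z₀ = 0 := by simp [z₀, dotProduct_sub, htz, htm]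
  have h₀ : 1 + vecMulVec z₀ t ∈ fnMatrices n A Q := by
    rw [one_add_vecMulVec_eq_commutator hz₀m htm htz₀]
    refine mul_mem (mul_mem (mul_mem ?_ ?_) ?_) ?_
    · exact one_add_vecMulVec_single_right_mem_fnMatrices hz₀m (by simpa using hz₀)
    · exact one_add_vecMulVec_single_left_mem_fnMatrices htm (by simpa using ht)
    · exact one_add_vecMulVec_single_right_mem_fnMatrices (by simp [hz₀m]) (by simpa using hz₀)
    · exact one_add_vecMulVec_single_left_mem_fnMatrices (by simp [htm]) (by simpa using ht)
  rw [← sub_add_cancel z (Pi.single m (z m)), add_vecMulVec, ← add_assoc,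
    ← one_add_vecMulVec_mul_one_add_vecMulVec (by simp [htm])]
  exact mul_mem h₀ (one_add_vecMulVec_single_left_mem_fnMatrices htm
    fun k ↦ Q.mul_mem_left _ (ht k))

theorem one_add_vecMulVec_smul_mem_fnMatrices (hn : 3 ≤ n) {a b : A} (ha : a ∈ Q) (hb : b ∈ Q)
    {u v : Fin n → A} (hvu : v ⬝ᵥ u = 0) (w : Fin n → A) :
    1 + vecMulVec (a • u) ((b * (w ⬝ᵥ u)) • v) ∈ fnMatrices n A Q := by
  have hsum : (b * (w ⬝ᵥ u)) • v =
      ∑ k, ∑ l, (b * w k * v l) • (Pi.single l (u k) - Pi.single k (u l)) := by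
    rw [← smul_smul, ← sub_zero ((w ⬝ᵥ u) • v), ← zero_smul A w, ← hvu,
      ← sum_smul_single_sub_single]
    simp_rw [Finset.smul_sum, smul_smul, mul_assoc]
  have horth : ∀ k l, (Pi.single l (u k) - Pi.single k (u l)) ⬝ᵥ u = 0 := fun k l ↦ by
    rw [sub_dotProduct, single_dotProduct, single_dotProduct, mul_comm, sub_self]
  rw [hsum]
  refine one_add_vecMulVec_sum_right_mem _ _ _ (fun k _ ↦ ?_) (fun k _ ↦ ?_)
  · simp only [sum_dotProduct, smul_dotProduct, dotProduct_smul, horth, smul_zero,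
      Finset.sum_const_zero]
  refine one_add_vecMulVec_sum_right_mem _ _ _ (fun l _ ↦ ?_) (fun l _ ↦ ?_)
  · simp only [smul_dotProduct, dotProduct_smul, horth, smul_zero]
  obtain ⟨m, hmk, hml⟩ := Fin.exists_ne_and_ne_of_two_lt k l (by omega)
  refine one_add_vecMulVec_mem_fnMatrices (m := m) (by simp [hmk, hml])
    (by simp only [smul_dotProduct, dotProduct_smul, horth, smul_zero])
    (fun p ↦ by simpa using Q.mul_mem_right _ ha)
    (fun p ↦ by simpa [mul_assoc] using Q.mul_mem_right _ hb)

theorem exists_mem_Fn_mul_transvection_eq (hn : 3 ≤ n) {a b : A} (ha : a ∈ Q) (hb : b ∈ Q)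
    (D : Matrix (Fin n) (Fin n) A) {i j : Fin n} (hij : i ≠ j) :
    ∃ N ∈ Fn n A Q, D * (SpecialLinearGroup.transvection hij (a * b * D.det ^ 2) :
      Matrix (Fin n) (Fin n) A) = N * D := by
  set u := D *ᵥ Pi.single i 1
  set v := Pi.single j 1 ᵥ* D.adjugate
  have hvD : v ᵥ* D = D.det • Pi.single j 1 := by
    rw [vecMul_vecMul, adjugate_mul, vecMul_smul, vecMul_one]
  have hvu : v ⬝ᵥ u = 0 := by
    rw [dotProduct_mulVec, hvD, smul_dotProduct, single_dotProduct,
      Pi.single_eq_of_ne hij.symm, mul_zero, smul_zero]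
  have hwu : (Pi.single i 1 ᵥ* D.adjugate) ⬝ᵥ u = D.det := by
    rw [dotProduct_mulVec, vecMul_vecMul, adjugate_mul, vecMul_smul, vecMul_one,
      smul_dotProduct, single_dotProduct, Pi.single_eq_same, one_mul, smul_eq_mul, mul_one]
  obtain ⟨N, hN, hNX⟩ := mem_fnMatrices_iff.1
    (one_add_vecMulVec_smul_mem_fnMatrices hn ha hb hvu (Pi.single i 1 ᵥ* D.adjugate))
  refine ⟨N, hN, ?_⟩
  rw [hNX, hwu, SpecialLinearGroup.transvection_coe, add_mul, vecMulVec_mul, smul_vecMul, hvD,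
    mul_add, one_mul, mul_one, ← one_mul (a * b * D.det ^ 2), ← vecMulVec_single_single,
    mul_vecMulVec]
  congr 1
  ext p r
  by_cases hr : r = j <;> simp [u, vecMulVec_apply, hr]
  ring

theorem transvection_mem_of_det_dvd_pow (hn : 3 ≤ n) {q : A} (hq : q ∈ Q)
    {D : Matrix (Fin n) (Fin n) A} {e : ℕ} (hD : D.det ∣ q ^ e)
    {H : Subgroup (Matrix.SpecialLinearGroup (Fin n) A)}
    (hH : ∀ M : Matrix.SpecialLinearGroup (Fin n) A,
      (∃ N ∈ Fn n A Q, D * (M : Matrix (Fin n) (Fin n) A) = N * D) → M ∈ H)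
    {i j : Fin n} (hij : i ≠ j) (c : A) :
    SpecialLinearGroup.transvection hij (c * q ^ (2 * e + 2)) ∈ H := by
  obtain ⟨r, hr⟩ := hD
  have hc : c * q ^ (2 * e + 2) = q * (q * c * r ^ 2) * D.det ^ 2 := by
    linear_combination (c * q ^ 2 * (q ^ e + D.det * r)) * hr
  rw [hc]
  exact hH _ (exists_mem_Fn_mul_transvection_eq hn hq
    (Q.mul_mem_right _ (Q.mul_mem_right _ hq)) D hij)

end fnMatrices

theorem en_le_of_conj_fn_general (A : Type*) [CommRing A]
    (n : ℕ) (hn : 3 ≤ n)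
    (q q' : A)
    (hco : Ideal.span {q} + Ideal.span {q'} = ⊤)
    (D D' : Matrix (Fin n) (Fin n) A)
    (hD : ∃ e : ℕ, D.det ∣ q ^ e) (hD' : ∃ e : ℕ, D'.det ∣ q' ^ e)
    (H : Subgroup (Matrix.SpecialLinearGroup (Fin n) A))
    (h1 : ∀ M : Matrix.SpecialLinearGroup (Fin n) A,
      (∃ N ∈ Fn n A (Ideal.span {q}),
        D * (M : Matrix (Fin n) (Fin n) A) = (N : Matrix (Fin n) (Fin n) A) * D) →
      M ∈ H)
    (h2 : ∀ M : Matrix.SpecialLinearGroup (Fin n) A,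
      (∃ N' ∈ Fn n A (Ideal.span {q'}),
        D' * (M : Matrix (Fin n) (Fin n) A) = (N' : Matrix (Fin n) (Fin n) A) * D') →
      M ∈ H) :
    En n A ≤ H := by
  obtain ⟨e, hD⟩ := hD
  obtain ⟨e', hD'⟩ := hD'
  have hcop : IsCoprime q q' := by
    rwa [← Ideal.isCoprime_span_singleton_iff, Ideal.isCoprime_iff_add, Ideal.one_eq_top]
  obtain ⟨α, β, hαβ⟩ := hcop.pow (m := 2 * e + 2) (n := 2 * e' + 2)
  rw [En, Subgroup.closure_le]
  rintro g ⟨i, j, hij, a, -, hg⟩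
  have hsplit : g = SpecialLinearGroup.transvection hij (a * α * q ^ (2 * e + 2)) *
      SpecialLinearGroup.transvection hij (a * β * q' ^ (2 * e' + 2)) := by
    rw [← SpecialLinearGroup.transvection_add]
    refine Subtype.ext ?_
    rw [hg, SpecialLinearGroup.transvection_coe]
    congr
    linear_combination -a * hαβ
  rw [hsplit]
  exact H.mul_mem
    (transvection_mem_of_det_dvd_pow hn (Ideal.mem_span_singleton_self q) hD h1 hij _)
    (transvection_mem_of_det_dvd_pow hn (Ideal.mem_span_singleton_self q') hD' h2 hij _)

/-- **Proposition 5.4 of the paper.** Let `A` be a Dedekind domain, `n ≥ 3`, and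
`q, q' ∈ A` nonzero elements generating proper comaximal principal ideals
`𝔮 = qA`, `𝔮' = q'A`. Let `D, D'` be matrices over `A` whose determinants divide
powers of `q` and `q'` respectively. If a subgroup `H ≤ SL_n(A)` contains every
`M ∈ SL_n(A)` with `D·M = N·D` for some `N ∈ F_n(A,𝔮)`, as well as every
`M ∈ SL_n(A)` with `D'·M = N'·D'` for some `N' ∈ F_n(A,𝔮')`, then `H ⊇ E_n(A)`. -/
theorem en_le_of_conj_fn (A : Type*) [CommRing A] [IsDedekindDomain A]
    (n : ℕ) (hn : 3 ≤ n)
    (q q' : A) (hq0 : q ≠ 0) (hq'0 : q' ≠ 0)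
    (hq : Ideal.span {q} ≠ ⊤) (hq' : Ideal.span {q'} ≠ ⊤)
    (hco : Ideal.span {q} + Ideal.span {q'} = ⊤)
    (D D' : Matrix (Fin n) (Fin n) A)
    (hD : ∃ e : ℕ, D.det ∣ q ^ e) (hD' : ∃ e : ℕ, D'.det ∣ q' ^ e)
    (H : Subgroup (Matrix.SpecialLinearGroup (Fin n) A))
    (h1 : ∀ M : Matrix.SpecialLinearGroup (Fin n) A,
      (∃ N ∈ Fn n A (Ideal.span {q}),
        D * (M : Matrix (Fin n) (Fin n) A) = (N : Matrix (Fin n) (Fin n) A) * D) →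
      M ∈ H)
    (h2 : ∀ M : Matrix.SpecialLinearGroup (Fin n) A,
      (∃ N' ∈ Fn n A (Ideal.span {q'}),
        D' * (M : Matrix (Fin n) (Fin n) A) = (N' : Matrix (Fin n) (Fin n) A) * D') →
      M ∈ H) :
    En n A ≤ H :=
  en_le_of_conj_fn_general A n hn q q' hco D D' hD hD' H h1 h2
end

section
/- (Proposition 5.8 of the paper) Let A be an integral domain with fraction field K, n ≥ 3, q ∈ A a nonzero element, a_2,…,a_n ∈ A, and let σ = q·I + Σ_{i=2}^n a_i·e_{1i} ∈ Mat_n(A). Let 𝔭 ⊆ A be an ideal and let ℰ be a subgroup of SL_n(A) such that: (i) I + c·e_{ij} ∈ ℰ for every c ∈ A and all indices 2 ≤ i, j ≤ n with i ≠ j; and (ii) for every b ∈ 𝔭 and every 2 ≤ i ≤ n, the matrix σ·(I + b q²·e_{i1})·σ^{-1}, computed in Mat_n(K), has all entries in A and the resulting element of SL_n(A) belongs to ℰ. Assume in addition that SL_{n−1}(A) = E_{n−1}(A). Then for all indices 2 ≤ k, l ≤ n with k ≠ l and every b ∈ 𝔭, the matrix I + a_l b q²·e_{k1} − a_k b q²·e_{l1}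 belongs to ℰ. -/
/-!
Write `σ = q • 1 + N` with `N = ∑_{i ≠ 0} a_i e_{0i}`, so `N² = 0`, and
`W = b q (a_l e_{k0} - a_k e_{l0})`, so that the target matrix is `ρ = 1 + q W`, with
`N W = 0` and `W² = 0`. Then `σ ρ = θ σ` for `θ = 1 + q W - W N`, and `θ` is the product of
the two conjugates provided by (ii), so `θ ∈ ℰ`. Moreover `ρ = θ (1 + W N)`, where
`1 + W N = diag(1, B)` has determinant `det (1 + N W) = 1`; hence `B ∈ SL_{n-1}(A) = E_{n-1}(A)`
and `diag(1, B) ∈ ℰ` by (i).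
-/

open Matrix

section

variable {R B : Type*} [CommRing R] [Ring B] [Algebra R B] (q : R) {N W : B}

theorem smul_one_add_mul_smul_one_sub (hN : N * N = 0) :
    (q • 1 + N) * (q • 1 - N) = (q * q) • (1 : B) := by
  simp only [add_mul, mul_sub, smul_mul_assoc, mul_smul_comm, one_mul, mul_one, smul_add,
    smul_smul, hN]
  abel

theorem smul_one_add_mul_one_add_smul (hNN : N * N = 0) (hNW : N * W = 0) :
    (q • 1 + N) * (1 + q • W) = (1 + q • W - W * N) * (q • 1 + N) := by
  simp only [add_mul, mul_add, sub_mul, smul_mul_assoc, mul_smul_comm, one_mul, mul_one,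
    smul_add, smul_sub, smul_smul, mul_assoc, hNN, hNW, smul_zero, mul_zero]
  abel

theorem one_add_smul_eq_mul (hNW : N * W = 0) (hWW : W * W = 0) :
    1 + q • W = (1 + q • W - W * N) * (1 + W * N) := by
  have hWNWN : W * N * (W * N) = 0 := by rw [mul_assoc, ← mul_assoc N, hNW, zero_mul, mul_zero]
  have hWWN : W * (W * N) = 0 := by rw [← mul_assoc, hWW, zero_mul]
  simp only [add_mul, mul_add, sub_mul, smul_mul_assoc, one_mul, mul_one, hWNWN, hWWN,
    smul_zero]
  abel

end

namespace Matrix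

variable {A : Type*} [CommRing A]

section OneBlock

variable {n : ℕ}

def finSuccEquivSum (n : ℕ) : Fin (n + 1) ≃ Fin n ⊕ Unit :=
  (finSuccEquiv n).trans (Equiv.optionEquivSumPUnit (Fin n))

@[simp]
theorem finSuccEquivSum_zero : finSuccEquivSum n 0 = Sum.inr () := by
  simp [finSuccEquivSum]

@[simp]
theorem finSuccEquivSum_succ (i : Fin n) : finSuccEquivSum n i.succ = Sum.inl i := by
  simp [finSuccEquivSum]

/-- The block-diagonal matrix `diag(1, B)`, with the entry `1` at index `0`. -/
def oneBlock (B : Matrix (Fin n) (Fin n) A) : Matrix (Fin (n + 1)) (Fin (n + 1)) A :=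
  (fromBlocks B 0 0 1).submatrix (finSuccEquivSum n) (finSuccEquivSum n)

@[simp]
theorem oneBlock_zero_zero (B : Matrix (Fin n) (Fin n) A) : oneBlock B 0 0 = 1 := by
  simp [oneBlock]

@[simp]
theorem oneBlock_zero_succ (B : Matrix (Fin n) (Fin n) A) (j : Fin n) :
    oneBlock B 0 j.succ = 0 := by
  simp [oneBlock]

@[simp]
theorem oneBlock_succ_zero (B : Matrix (Fin n) (Fin n) A) (i : Fin n) :
    oneBlock B i.succ 0 = 0 := by
  simp [oneBlock]

@[simp]
theorem oneBlock_succ_succ (B : Matrix (Fin n) (Fin n) A) (i j : Fin n) :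
    oneBlock B i.succ j.succ = B i j := by
  simp [oneBlock]

theorem oneBlock_mul (B C : Matrix (Fin n) (Fin n) A) :
    oneBlock (B * C) = oneBlock B * oneBlock C := by
  simp [oneBlock, submatrix_mul_equiv, fromBlocks_multiply]

theorem oneBlock_one : oneBlock (1 : Matrix (Fin n) (Fin n) A) = 1 := by
  rw [oneBlock, fromBlocks_one, submatrix_one_equiv]

@[simp]
theorem det_oneBlock (B : Matrix (Fin n) (Fin n) A) : (oneBlock B).det = B.det := by
  simp [oneBlock]

theorem oneBlock_one_add_single (i j : Fin n) (c : A) :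
    oneBlock (1 + single i j c) = 1 + single i.succ j.succ c := by
  ext r s
  induction r using Fin.cases <;> induction s using Fin.cases <;>
    simp [one_apply, single_apply, Fin.succ_ne_zero, (Fin.succ_ne_zero _).symm]

theorem one_add_eq_oneBlock {P : Matrix (Fin (n + 1)) (Fin (n + 1)) A}
    (hrow : ∀ j, P 0 j = 0) (hcol : ∀ i, P i 0 = 0) :
    1 + P = oneBlock (1 + P.submatrix Fin.succ Fin.succ) := by
  ext r s
  induction r using Fin.cases <;> induction s using Fin.cases <;>
    simp [one_apply, hrow, hcol, Fin.succ_ne_zero, (Fin.succ_ne_zero _).symm]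

namespace SpecialLinearGroup

def oneBlockHom : SpecialLinearGroup (Fin n) A →* SpecialLinearGroup (Fin (n + 1)) A where
  toFun B := ⟨oneBlock (B : Matrix (Fin n) (Fin n) A), by rw [det_oneBlock, B.2]⟩
  map_one' := Subtype.ext oneBlock_one
  map_mul' B C := Subtype.ext (oneBlock_mul (B : Matrix (Fin n) (Fin n) A) C)

theorem range_oneBlockHom_le {ℰ : Subgroup (SpecialLinearGroup (Fin (n + 1)) A)}
    (hi : ∀ (c : A) (i j : Fin (n + 1)), i ≠ 0 → j ≠ 0 → i ≠ j →
      ∀ τ : SpecialLinearGroup (Fin (n + 1)) A,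
        (τ : Matrix (Fin (n + 1)) (Fin (n + 1)) A) = 1 + single i j c → τ ∈ ℰ)
    (hE : En n A = ⊤) :
    oneBlockHom.range ≤ ℰ := by
  have hclosure : En n A ≤ ℰ.comap oneBlockHom := by
    refine Subgroup.closure_le _ |>.mpr ?_
    rintro B ⟨i, j, hij, c, -, hB⟩
    refine hi c i.succ j.succ (Fin.succ_ne_zero i) (Fin.succ_ne_zero j)
      (Fin.succ_injective _ |>.ne hij) _ ?_
    change oneBlock (B : Matrix (Fin n) (Fin n) A) = _
    rw [hB, oneBlock_one_add_single]
  rintro _ ⟨B, rfl⟩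
  exact hclosure (hE ▸ Subgroup.mem_top B)

theorem mem_range_oneBlockHom (D : SpecialLinearGroup (Fin (n + 1)) A)
    {P : Matrix (Fin (n + 1)) (Fin (n + 1)) A} (hD : (D : Matrix _ _ A) = 1 + P)
    (hrow : ∀ j, P 0 j = 0) (hcol : ∀ i, P i 0 = 0) :
    D ∈ oneBlockHom.range := by
  rw [one_add_eq_oneBlock hrow hcol] at hD
  refine ⟨⟨1 + P.submatrix Fin.succ Fin.succ, ?_⟩, Subtype.ext hD.symm⟩
  rw [← det_oneBlock, ← hD, D.2]

end SpecialLinearGroup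

end OneBlock

section TopRow

variable {n : ℕ}

/-- The nilpotent part `N = ∑_{i ≠ 0} a_i e_{0i}` of `σ = q • 1 + N`. -/
def topRow (a : Fin (n + 1) → A) : Matrix (Fin (n + 1)) (Fin (n + 1)) A :=
  ∑ i ∈ Finset.univ.filter (fun i : Fin (n + 1) => i ≠ 0), single 0 i (a i)

theorem topRow_apply_zero_right (a : Fin (n + 1) → A) (i : Fin (n + 1)) :
    topRow a i 0 = 0 := by
  rw [topRow, sum_apply]
  exact Finset.sum_eq_zero fun j hj => single_apply_of_ne _ _ _ _ _
    fun h => (Finset.mem_filter.mp hj).2 h.2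

theorem topRow_mul_single (a : Fin (n + 1) → A) {k : Fin (n + 1)} (hk : k ≠ 0) (c : A) :
    topRow a * (single k 0 c : Matrix (Fin (n + 1)) (Fin (n + 1)) A) =
      single 0 0 (a k * c) := by
  rw [topRow, Finset.sum_mul, Finset.sum_eq_single k]
  · exact single_mul_single_same _ _ _ _ _
  · exact fun j _ hjk => single_mul_single_of_ne _ _ _ _ hjk _
  · simp [hk]

theorem topRow_mul_self (a : Fin (n + 1) → A) : topRow a * topRow a = 0 := by
  rw [topRow, Finset.sum_mul]
  refine Finset.sum_eq_zero fun i hi => ?_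
  rw [Finset.mul_sum]
  exact Finset.sum_eq_zero fun j _ =>
    single_mul_single_of_ne _ _ _ _ (Finset.mem_filter.mp hi).2 _

theorem topRow_mul_single_sub_single (a : Fin (n + 1) → A) {k l : Fin (n + 1)} (hk : k ≠ 0)
    (hl : l ≠ 0) (c : A) :
    topRow a *
      (single k 0 (a l * c) - single l 0 (a k * c) : Matrix (Fin (n + 1)) (Fin (n + 1)) A) =
        0 := by
  rw [mul_sub, topRow_mul_single a hk, topRow_mul_single a hl, ← mul_assoc, ← mul_assoc,
    mul_comm (a k), sub_self]

theorem single_sub_single_mul_self {k l : Fin (n + 1)} (hk : k ≠ 0) (hl : l ≠ 0) (x y : A) :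
    (single k 0 x - single l 0 y : Matrix (Fin (n + 1)) (Fin (n + 1)) A) *
      (single k 0 x - single l 0 y : Matrix (Fin (n + 1)) (Fin (n + 1)) A) = 0 := by
  simp only [mul_sub, sub_mul, single_mul_single_of_ne _ _ _ _ hk.symm,
    single_mul_single_of_ne _ _ _ _ hl.symm, sub_zero]

theorem single_sub_single_apply_zero_left {k l : Fin (n + 1)} (hk : k ≠ 0) (hl : l ≠ 0)
    (x y : A) (j : Fin (n + 1)) :
    (single k 0 x - single l 0 y : Matrix (Fin (n + 1)) (Fin (n + 1)) A) 0 j = 0 := by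
  simp [hk, hl]

end TopRow

section Regular

variable {m : Type*} [Fintype m] [DecidableEq m]

theorem semiconjBy_of_mapMatrix_eq_conj {K : Type*} [Field K] {f : A →+* K}
    (hf : Function.Injective f) {σ M τ : Matrix m m A} (hσ : σ.det ≠ 0)
    (h : f.mapMatrix τ = f.mapMatrix σ * f.mapMatrix M * (f.mapMatrix σ)⁻¹) :
    SemiconjBy σ M τ := by
  have hσK : IsUnit (f.mapMatrix σ).det := by
    rw [← RingHom.map_det]
    exact ((map_ne_zero_iff f hf).mpr hσ).isUnit
  apply Matrix.map_injective hf
  change f.mapMatrix (σ * M) = f.mapMatrix (τ * σ)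
  rw [map_mul, map_mul, h, nonsing_inv_mul_cancel_right _ _ hσK]

variable [IsDomain A]

theorem det_smul_one_add_ne_zero {q : A} (hq : q ≠ 0) {N : Matrix m m A} (hN : N * N = 0) :
    (q • 1 + N).det ≠ 0 := by
  intro h
  have hprod := congrArg det (smul_one_add_mul_smul_one_sub q hN)
  rw [det_mul, h, zero_mul, det_smul, det_one, mul_one] at hprod
  exact pow_ne_zero _ (mul_ne_zero hq hq) hprod.symm

theorem SpecialLinearGroup.exists_mem_coe_eq_one_add_smul_of_conj {n : ℕ}
    {ℰ : Subgroup (SpecialLinearGroup (Fin (n + 1)) A)}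
    (hi : ∀ (c : A) (i j : Fin (n + 1)), i ≠ 0 → j ≠ 0 → i ≠ j →
      ∀ τ : SpecialLinearGroup (Fin (n + 1)) A,
        (τ : Matrix (Fin (n + 1)) (Fin (n + 1)) A) = 1 + single i j c → τ ∈ ℰ)
    (hE : En n A = ⊤) {q : A} (hq : q ≠ 0) {N W : Matrix (Fin (n + 1)) (Fin (n + 1)) A}
    (hNN : N * N = 0) (hNW : N * W = 0) (hWW : W * W = 0)
    (hN : ∀ i, N i 0 = 0) (hW : ∀ j, W 0 j = 0)
    {τ : SpecialLinearGroup (Fin (n + 1)) A} (hτ : τ ∈ ℰ)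
    (hconj : (τ : Matrix (Fin (n + 1)) (Fin (n + 1)) A) * (q • 1 + N) =
      (q • 1 + N) * (1 + q • W)) :
    ∃ ρ ∈ ℰ, (ρ : Matrix (Fin (n + 1)) (Fin (n + 1)) A) = 1 + q • W := by
  have hσ := IsRegular.of_ne_zero (det_smul_one_add_ne_zero hq hNN)
  have hτθ : (τ : Matrix (Fin (n + 1)) (Fin (n + 1)) A) = 1 + q • W - W * N :=
    (isRegular_of_isLeftRegular_det hσ.left).right
      (hconj.trans (smul_one_add_mul_one_add_smul q hNN hNW))
  have hdet : (1 + W * N).det = 1 := by rw [det_one_add_mul_comm, hNW, add_zero, det_one]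
  let μ : SpecialLinearGroup (Fin (n + 1)) A := ⟨1 + W * N, hdet⟩
  have hμ : μ ∈ ℰ := range_oneBlockHom_le hi hE <| mem_range_oneBlockHom μ rfl
    (fun j => by simp [mul_apply, hW]) (fun i => by simp [mul_apply, hN])
  refine ⟨τ * μ, mul_mem hτ hμ, ?_⟩
  rw [coe_mul, hτθ]
  exact (one_add_smul_eq_mul q hNW hWW).symm

end Regular

end Matrix

/-- **Proposition 5.8 of the paper.** In the setting of Lemma 5.7 (matrix size
`n + 3`, i.e. `n ≥ 3`; `σ = q·I + Σ_{i≠1} a_i·e_{1i}`, the paper's index `1`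
being `0 : Fin (n+3)`; `ℰ ≤ SL_n(A)` satisfying conditions (i) and (ii)),
assume additionally that `SL_{n−1}(A) = E_{n−1}(A)`.  Then for all `k ≠ l`
(both `≠ 0`) and every `b ∈ 𝔭` the matrix
`I + a_l b q²·e_{k0} − a_k b q²·e_{l0}` belongs to `ℰ`. -/
theorem prop_5_8 (A : Type*) [CommRing A] [IsDomain A] (n : ℕ)
    (q : A) (hq : q ≠ 0) (a : Fin (n + 3) → A) (𝔭 : Ideal A)
    (ℰ : Subgroup (Matrix.SpecialLinearGroup (Fin (n + 3)) A))
    (σ : Matrix (Fin (n + 3)) (Fin (n + 3)) A)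
    (hσ : σ = q • (1 : Matrix (Fin (n + 3)) (Fin (n + 3)) A)
        + ∑ i ∈ Finset.univ.filter (fun i : Fin (n + 3) => i ≠ 0),
            Matrix.single 0 i (a i))
    (hi : ∀ (c : A) (i j : Fin (n + 3)), i ≠ 0 → j ≠ 0 → i ≠ j →
      ∀ τ : Matrix.SpecialLinearGroup (Fin (n + 3)) A,
        (τ : Matrix (Fin (n + 3)) (Fin (n + 3)) A) =
          1 + Matrix.single i j c → τ ∈ ℰ)
    (hii : ∀ b ∈ 𝔭, ∀ i : Fin (n + 3), i ≠ 0 →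
      ∃ τ : Matrix.SpecialLinearGroup (Fin (n + 3)) A, τ ∈ ℰ ∧
        (algebraMap A (FractionRing A)).mapMatrix
            (τ : Matrix (Fin (n + 3)) (Fin (n + 3)) A) =
          (algebraMap A (FractionRing A)).mapMatrix σ *
            (algebraMap A (FractionRing A)).mapMatrix
              (1 + Matrix.single i 0 (b * q ^ 2)) *
            ((algebraMap A (FractionRing A)).mapMatrix σ)⁻¹)
    (hSLE : En (n + 2) A = ⊤) :
    ∀ (k l : Fin (n + 3)), k ≠ 0 → l ≠ 0 → k ≠ l → ∀ b ∈ 𝔭,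
      ((1 + Matrix.single k 0 (a l * b * q ^ 2)
          - Matrix.single l 0 (a k * b * q ^ 2) :
            Matrix (Fin (n + 3)) (Fin (n + 3)) A).det = 1) ∧
      ∀ τ : Matrix.SpecialLinearGroup (Fin (n + 3)) A,
        (τ : Matrix (Fin (n + 3)) (Fin (n + 3)) A) =
          1 + Matrix.single k 0 (a l * b * q ^ 2)
            - Matrix.single l 0 (a k * b * q ^ 2) → τ ∈ ℰ := by
  intro k l hk hl _ b hb
  replace hσ : σ = q • 1 + topRow a := hσ
  set W : Matrix (Fin (n + 3)) (Fin (n + 3)) A :=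
    single k 0 (a l * (b * q)) - single l 0 (a k * (b * q))
  have hρ : 1 + single k 0 (a l * b * q ^ 2) - single l 0 (a k * b * q ^ 2) = 1 + q • W := by
    simp only [W, smul_sub, smul_single, smul_eq_mul, add_sub_assoc]
    congr 3 <;> ring
  have hprod : (1 + single k 0 (a l * b * q ^ 2)) * (1 + single l 0 (-a k * b * q ^ 2)) =
      1 + q • W := by
    rw [mul_add, mul_one, add_mul, one_mul, single_mul_single_of_ne _ _ _ _ hl.symm, add_zero,
      ← hρ, add_sub_assoc, add_assoc, neg_mul, neg_mul, ← neg_one_smul A (a k * b * q ^ 2),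
      ← smul_single, neg_one_smul, sub_eq_add_neg]
  have hσdet : σ.det ≠ 0 := hσ ▸ det_smul_one_add_ne_zero hq (topRow_mul_self a)
  have hinj := IsFractionRing.injective A (FractionRing A)
  obtain ⟨τ₁, hτ₁, hτ₁σ⟩ := hii _ (𝔭.mul_mem_left (a l) hb) k hk
  obtain ⟨τ₂, hτ₂, hτ₂σ⟩ := hii _ (𝔭.mul_mem_left (-a k) hb) l hl
  have hconj := (semiconjBy_of_mapMatrix_eq_conj hinj hσdet hτ₁σ).mul_right
    (semiconjBy_of_mapMatrix_eq_conj hinj hσdet hτ₂σ)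
  rw [hprod, hσ] at hconj
  obtain ⟨ρ, hρℰ, hρW⟩ :=
    SpecialLinearGroup.exists_mem_coe_eq_one_add_smul_of_conj hi hSLE hq (topRow_mul_self a)
      (topRow_mul_single_sub_single a hk hl _) (single_sub_single_mul_self hk hl _ _)
      (topRow_apply_zero_right a) (single_sub_single_apply_zero_left hk hl _ _)
      (mul_mem hτ₁ hτ₂) hconj.symm
  refine ⟨hρ ▸ hρW ▸ ρ.2, fun τ hτ => ?_⟩
  rwa [Subtype.ext (hτ.trans (hρ.trans hρW.symm))]
end

section
/- (Lemma 6.10(1) of the paper) For every f ∈ F̃' and every g ∈ F̃: π(f∘g) = π(g) + π(f)∘χ(g) and π(g∘f) = χ(g)∘π(f) + π(g), where π(f)∘χ(g) denotes the (exact) substitution of the linear tuple χ(g) into the tuple of forms π(f), and χ(g)∘π(f) denotes the substitution of the tuple π(f) into the linear tuple χ(g). In particular, if also g ∈ F̃', then π(f∘g) = π(f) + π(g). -/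
/-- Truncation modulo `I^k`: the sum of the homogeneous components of degree `< k`
(`I` being the ideal of polynomials with zero constant term). -/
noncomputable def truncLT {A : Type*} [CommRing A] {σ : Type*} (k : ℕ)
    (p : MvPolynomial σ A) : MvPolynomial σ A :=
  ∑ d ∈ Finset.range k, MvPolynomial.homogeneousComponent d p

/-- Composition of tuples of polynomials modulo `I^k`: substitute the tuple `g`
for the variables in `f`, then delete all monomials of total degree `≥ k`. -/
noncomputable def polyComp {A : Type*} [CommRing A] {σ : Type*} (k : ℕ)
    (f g : σ → MvPolynomial σ A) : σ → MvPolynomial σ A :=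
  fun i => truncLT k (MvPolynomial.bind₁ g (f i))

/-- `f ∈ F̃`: each component has zero constant term and total degree `≤ k − 1`. -/
def memFtilde {A : Type*} [CommRing A] {σ : Type*} (k : ℕ)
    (f : σ → MvPolynomial σ A) : Prop :=
  ∀ i, MvPolynomial.coeff 0 (f i) = 0 ∧ (f i).totalDegree ≤ k - 1

/-- `χ(f)`: the tuple of degree-1 homogeneous components. -/
noncomputable def chiLin {A : Type*} [CommRing A] {σ : Type*}
    (f : σ → MvPolynomial σ A) : σ → MvPolynomial σ A :=
  fun i => MvPolynomial.homogeneousComponent 1 (f i)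

/-- `π(f)`: the tuple of degree-(k−1) homogeneous components. -/
noncomputable def piTop {A : Type*} [CommRing A] {σ : Type*} (k : ℕ)
    (f : σ → MvPolynomial σ A) : σ → MvPolynomial σ A :=
  fun i => MvPolynomial.homogeneousComponent (k - 1) (f i)

/-- `f ∈ F̃'`: `f ∈ F̃` and `f(u) = u + π(f)(u)`. -/
def memFtilde' {A : Type*} [CommRing A] {σ : Type*} (k : ℕ)
    (f : σ → MvPolynomial σ A) : Prop :=
  memFtilde k f ∧ ∀ i, f i - MvPolynomial.homogeneousComponent (k - 1) (f i) =
    MvPolynomial.X i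

/-! Write `𝔪` for the ideal of the variables, so that `I ^ k = 𝔪 ^ k` and the
degree-`(k - 1)` component of a polynomial only depends on its class modulo `𝔪 ^ k`.
Substitution respects the `𝔪`-adic filtration: if `φ ≡ ψ` modulo `𝔪 ^ m` componentwise,
then `p(φ) ≡ p(ψ)` modulo `𝔪 ^ (d - 1 + m)` for `p ∈ 𝔪 ^ d`. Since `f = u + π(f)` and
`g ≡ χ(g)` modulo `𝔪 ^ 2`, this gives `π(f)(g) ≡ π(f)(χ(g))` and `(g - χ(g))(f) ≡ g - χ(g)`
modulo `𝔪 ^ k`, and both formulas follow by taking degree-`(k - 1)` components. If moreover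
`g ∈ F̃'` and `k ≥ 3`, then `χ(g)` is the identity; for `k ≤ 2` the set `F̃'` is empty unless
the ring is zero. -/

theorem sub_mem_pow_mul_of_mem_pow_succ {R S F : Type*} [CommRing R] [CommRing S]
    [FunLike F R S] [RingHomClass F R S] {φ ψ : F} {I : Ideal R} {K J : Ideal S}
    (hφ : I.map φ ≤ K) (hψ : I.map ψ ≤ K) (hφψ : ∀ x ∈ I, φ x - ψ x ∈ J) :
    ∀ (n : ℕ) {x : R}, x ∈ I ^ (n + 1) → φ x - ψ x ∈ K ^ n * J
  | 0, x, hx => by simpa using hφψ x (by simpa using hx)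
  | n + 1, x, hx => by
    rw [pow_succ'] at hx
    refine Submodule.smul_induction_on hx (fun a ha b hb => ?_) (fun x y hx hy => ?_)
    · have hψb : ψ b ∈ K ^ (n + 1) :=
        Ideal.map_pow ψ I (n + 1) ▸ Ideal.pow_right_mono hψ (n + 1) <|
          Ideal.mem_map_of_mem ψ hb
      rw [smul_eq_mul, map_mul, map_mul,
        show φ a * φ b - ψ a * ψ b = φ a * (φ b - ψ b) + (φ a - ψ a) * ψ b by ring]
      refine Ideal.add_mem _ ?_ ?_
      · rw [pow_succ', mul_assoc]
        exact Ideal.mul_mem_mul (hφ (Ideal.mem_map_of_mem φ ha))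
          (sub_mem_pow_mul_of_mem_pow_succ hφ hψ hφψ n hb)
      · rw [mul_comm (K ^ (n + 1))]
        exact Ideal.mul_mem_mul (hφψ a ha) hψb
    · rw [map_add, map_add, add_sub_add_comm]
      exact Ideal.add_mem _ hx hy

namespace MvPolynomial

variable {A σ τ : Type*} [CommRing A]

theorem mem_idealOfVars_of_coeff_zero_eq_zero {p : MvPolynomial σ A} (hp : coeff 0 p = 0) :
    p ∈ idealOfVars σ A := by
  rw [← pow_one (idealOfVars σ A), mem_pow_idealOfVars_iff']
  intro x hx
  rw [Nat.lt_one_iff, Finsupp.degree_eq_zero_iff] at hx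
  rwa [hx]

theorem IsHomogeneous.mem_pow_idealOfVars {p : MvPolynomial σ A} {n : ℕ}
    (hp : p.IsHomogeneous n) : p ∈ idealOfVars σ A ^ n :=
  (mem_pow_idealOfVars_iff n p).2 fun _ hx =>
    (hp.degree_eq_sum_deg_support hx).le

theorem sub_homogeneousComponent_one_mem_sq_idealOfVars {p : MvPolynomial σ A}
    (hp : coeff 0 p = 0) :
    p - homogeneousComponent 1 p ∈ idealOfVars σ A ^ 2 := by
  refine (mem_pow_idealOfVars_iff' 2 _).2 fun x hx => ?_
  rw [coeff_sub, coeff_homogeneousComponent]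
  split_ifs with h1
  · exact sub_self _
  · obtain rfl : x = 0 := (Finsupp.degree_eq_zero_iff x).1 (by omega)
    rw [hp, sub_zero]

theorem homogeneousComponent_eq_of_sub_mem_pow_idealOfVars {p q : MvPolynomial σ A} {c e : ℕ}
    (h : p - q ∈ idealOfVars σ A ^ c) (he : e < c) :
    homogeneousComponent e p = homogeneousComponent e q := by
  rw [← sub_eq_zero, ← map_sub]
  ext x
  rw [coeff_homogeneousComponent, coeff_zero]
  split_ifs with hx
  · exact (mem_pow_idealOfVars_iff' c _).1 h x (hx ▸ he)
  · rfl

theorem bind₁_sub_bind₁_mem_pow_idealOfVars {φ ψ : σ → MvPolynomial τ A}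
    (hφ : ∀ j, φ j ∈ idealOfVars τ A) (hψ : ∀ j, ψ j ∈ idealOfVars τ A) {m : ℕ}
    (hφψ : ∀ j, φ j - ψ j ∈ idealOfVars τ A ^ m) {n : ℕ} {p : MvPolynomial σ A}
    (hp : p ∈ idealOfVars σ A ^ (n + 1)) :
    bind₁ φ p - bind₁ ψ p ∈ idealOfVars τ A ^ (n + m) := by
  have map_le {χ : σ → MvPolynomial τ A} (hχ : ∀ j, χ j ∈ idealOfVars τ A) :
      (idealOfVars σ A).map (bind₁ χ) ≤ idealOfVars τ A := by
    rw [Ideal.map_span, Ideal.span_le, ← Set.range_comp, Set.range_subset_iff]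
    simpa using hχ
  rw [pow_add]
  refine sub_mem_pow_mul_of_mem_pow_succ (map_le hφ) (map_le hψ) (fun x _ => ?_) n hp
  have hmk : (Ideal.Quotient.mkₐ A (idealOfVars τ A ^ m)).comp (bind₁ φ)
      = (Ideal.Quotient.mkₐ A (idealOfVars τ A ^ m)).comp (bind₁ ψ) :=
    algHom_ext fun j => by simpa [Ideal.Quotient.eq] using hφψ j
  exact Ideal.Quotient.eq.1 (AlgHom.congr_fun hmk x)

theorem bind₁_add_of_isHomogeneous_one (φ ψ : σ → MvPolynomial τ A)
    {ℓ : MvPolynomial σ A} (hℓ : ℓ.IsHomogeneous 1) :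
    bind₁ (φ + ψ) ℓ = bind₁ φ ℓ + bind₁ ψ ℓ := by
  have hspan : ℓ ∈ Submodule.span A (Set.range X) := by
    rw [← homogeneousSubmodule_one_eq_span_X]
    exact hℓ
  refine LinearMap.eqOn_span (f := (bind₁ (φ + ψ)).toLinearMap)
    (g := (bind₁ φ).toLinearMap + (bind₁ ψ).toLinearMap) ?_ hspan
  rintro _ ⟨j, rfl⟩
  simp

theorem homogeneousComponent_truncLT {k e : ℕ} (he : e < k) (p : MvPolynomial σ A) :
    homogeneousComponent e (truncLT k p) = homogeneousComponent e p := by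
  rw [truncLT, map_sum, Finset.sum_eq_single_of_mem e (Finset.mem_range.2 he)]
  · exact homogeneousComponent_eq_self (homogeneousComponent_isHomogeneous e p)
  · intro d _ hd
    rw [homogeneousComponent_of_mem (homogeneousComponent_mem d p), if_neg hd.symm]

end MvPolynomial

open MvPolynomial

section

variable {A σ : Type*} [CommRing A] {k : ℕ} {f g : σ → MvPolynomial σ A}

theorem memFtilde'.eq_X_add_piTop (hf : memFtilde' k f) : f = X + piTop k f := by
  funext i
  exact sub_eq_iff_eq_add.1 (hf.2 i)

theorem memFtilde'.subsingleton [Nonempty σ] (hf : memFtilde' k f) (hk : k ≤ 2) :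
    Subsingleton A := by
  obtain ⟨i⟩ := ‹Nonempty σ›
  have hX : (X i : MvPolynomial σ A) = 0 := by
    rw [← homogeneousComponent_eq_self (isHomogeneous_X A i), ← hf.2 i, map_sub,
      homogeneousComponent_of_mem (homogeneousComponent_mem _ _), sub_eq_zero]
    rcases (by omega : k - 1 = 1 ∨ k - 1 = 0) with hk1 | hk0
    · rw [hk1, if_pos rfl]
    · rw [hk0, if_neg one_ne_zero]
      exact homogeneousComponent_eq_zero _ _ (by have := (hf.1 i).2; omega)
  have h10 : (1 : A) = 0 := by simpa using congrArg (coeff (Finsupp.single i 1)) hX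
  exact subsingleton_of_zero_eq_one h10.symm

theorem piTop_polyComp (hk : 1 ≤ k) (i : σ) :
    piTop k (polyComp k f g) i = homogeneousComponent (k - 1) (bind₁ g (f i)) :=
  homogeneousComponent_truncLT (by omega) _

theorem piTop_polyComp_of_left_eq_X_add (hk : 2 ≤ k) (hf : f = X + piTop k f)
    (hg : ∀ j, coeff 0 (g j) = 0) (i : σ) :
    piTop k (polyComp k f g) i = piTop k g i + bind₁ (chiLin g) (piTop k f i) := by
  have hπf : (piTop k f i).IsHomogeneous (k - 1) := homogeneousComponent_isHomogeneous _ _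
  have hχ : ∀ j, (chiLin g j).IsHomogeneous 1 := fun j => homogeneousComponent_isHomogeneous _ _
  have hπfχ : (bind₁ (chiLin g) (piTop k f i)).IsHomogeneous (k - 1) := by
    simpa using hπf.aeval (chiLin g) hχ
  have hsub : bind₁ g (piTop k f i) - bind₁ (chiLin g) (piTop k f i)
      ∈ idealOfVars σ A ^ (k - 2 + 2) :=
    bind₁_sub_bind₁_mem_pow_idealOfVars (fun j => mem_idealOfVars_of_coeff_zero_eq_zero (hg j))
      (fun j => pow_one (idealOfVars σ A) ▸ (hχ j).mem_pow_idealOfVars)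
      (fun j => sub_homogeneousComponent_one_mem_sq_idealOfVars (hg j))
      (by rw [show k - 2 + 1 = k - 1 by omega]; exact hπf.mem_pow_idealOfVars)
  rw [piTop_polyComp (by omega), congrFun hf i, Pi.add_apply, map_add, bind₁_X_right, map_add,
    homogeneousComponent_eq_of_sub_mem_pow_idealOfVars hsub (by omega),
    homogeneousComponent_eq_self hπfχ]
  rfl

theorem piTop_polyComp_of_right_eq_X_add (hk : 2 ≤ k) (hf : f = X + piTop k f)
    (hg : ∀ j, coeff 0 (g j) = 0) (i : σ) :
    piTop k (polyComp k g f) i = bind₁ (piTop k f) (chiLin g i) + piTop k g i := by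
  have hχ : (chiLin g i).IsHomogeneous 1 := homogeneousComponent_isHomogeneous _ _
  have hχπf : (bind₁ (piTop k f) (chiLin g i)).IsHomogeneous (k - 1) := by
    simpa using hχ.aeval (piTop k f) fun j => homogeneousComponent_isHomogeneous _ _
  have hX : ∀ j, (X j : MvPolynomial σ A) ∈ idealOfVars σ A :=
    fun j => Ideal.subset_span ⟨j, rfl⟩
  have hfX : ∀ j, f j - X j ∈ idealOfVars σ A ^ (k - 1) := fun j => by
    rw [congrFun hf j, Pi.add_apply, add_sub_cancel_left]
    exact (homogeneousComponent_isHomogeneous _ _).mem_pow_idealOfVars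
  have hfm : ∀ j, f j ∈ idealOfVars σ A := fun j => by
    simpa using Ideal.add_mem _ (hX j) (Ideal.pow_le_self (by omega) (hfX j))
  have hsub : bind₁ f (g i - chiLin g i) - (g i - chiLin g i)
      ∈ idealOfVars σ A ^ (1 + (k - 1)) := by
    have := bind₁_sub_bind₁_mem_pow_idealOfVars hfm hX hfX
      (sub_homogeneousComponent_one_mem_sq_idealOfVars (hg i))
    rwa [bind₁_X_left, AlgHom.id_apply] at this
  have hlin : bind₁ f (chiLin g i) = chiLin g i + bind₁ (piTop k f) (chiLin g i) := by
    conv_lhs => rw [hf]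
    rw [bind₁_add_of_isHomogeneous_one _ _ hχ, bind₁_X_left, AlgHom.id_apply]
  have hsplit : bind₁ f (g i - chiLin g i) - (g i - chiLin g i)
      = bind₁ f (g i) - (g i + bind₁ (piTop k f) (chiLin g i)) := by
    rw [map_sub, hlin]; ring
  rw [piTop_polyComp (by omega),
    homogeneousComponent_eq_of_sub_mem_pow_idealOfVars (hsplit ▸ hsub) (by omega), map_add,
    homogeneousComponent_eq_self hχπf, add_comm]
  rfl

theorem chiLin_eq_X (hk : 3 ≤ k) (hg : g = X + piTop k g) : chiLin g = X := by
  funext j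
  rw [chiLin, congrFun hg j, Pi.add_apply, map_add,
    homogeneousComponent_eq_self (isHomogeneous_X A j), piTop,
    homogeneousComponent_of_mem (homogeneousComponent_mem _ _), if_neg (by omega), add_zero]

end

theorem lemma_6_10_1_general (A : Type*) [CommRing A] (n k : ℕ)
    (f g : Fin (n - 1) → MvPolynomial (Fin (n - 1)) A)
    (hf : memFtilde' k f) (hg : memFtilde k g) :
    (∀ i, piTop k (polyComp k f g) i
        = piTop k g i + MvPolynomial.bind₁ (chiLin g) (piTop k f i))
    ∧ (∀ i, piTop k (polyComp k g f) i
        = MvPolynomial.bind₁ (piTop k f) (chiLin g i) + piTop k g i)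
    ∧ (memFtilde' k g →
        ∀ i, piTop k (polyComp k f g) i = piTop k f i + piTop k g i) := by
  rcases isEmpty_or_nonempty (Fin (n - 1)) with _ | _
  · exact ⟨isEmptyElim, isEmptyElim, fun _ => isEmptyElim⟩
  rcases le_or_gt k 2 with hk | hk
  · have := hf.subsingleton hk
    exact ⟨fun _ => Subsingleton.elim _ _, fun _ => Subsingleton.elim _ _,
      fun _ _ => Subsingleton.elim _ _⟩
  have hg₀ : ∀ i, coeff 0 (g i) = 0 := fun i => (hg i).1
  refine ⟨piTop_polyComp_of_left_eq_X_add hk.le hf.eq_X_add_piTop hg₀,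
    piTop_polyComp_of_right_eq_X_add hk.le hf.eq_X_add_piTop hg₀, fun hg' i => ?_⟩
  rw [piTop_polyComp_of_left_eq_X_add hk.le hf.eq_X_add_piTop hg₀,
    chiLin_eq_X hk hg'.eq_X_add_piTop, bind₁_X_left, AlgHom.id_apply, add_comm]

/-- **Lemma 6.10(1) of the paper.** For `f ∈ F̃'` and `g ∈ F̃` (tuples of
polynomials in `n−1` variables, `n ≥ 2`, `k ≥ 2`):
`π(f∘g) = π(g) + π(f)∘χ(g)` and `π(g∘f) = χ(g)∘π(f) + π(g)`, where the outer
compositions are exact substitutions.  In particular, if also `g ∈ F̃'`, then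
`π(f∘g) = π(f) + π(g)`. -/
theorem lemma_6_10_1 (A : Type*) [CommRing A] (n k : ℕ) (hn : 2 ≤ n) (hk : 2 ≤ k)
    (f g : Fin (n - 1) → MvPolynomial (Fin (n - 1)) A)
    (hf : memFtilde' k f) (hg : memFtilde k g) :
    (∀ i, piTop k (polyComp k f g) i
        = piTop k g i + MvPolynomial.bind₁ (chiLin g) (piTop k f i))
    ∧ (∀ i, piTop k (polyComp k g f) i
        = MvPolynomial.bind₁ (piTop k f) (chiLin g i) + piTop k g i)
    ∧ (memFtilde' k g →
        ∀ i, piTop k (polyComp k f g) i = piTop k f i + piTop k g i) :=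
  lemma_6_10_1_general A n k f g hf hg
end
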